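/- In the setting of the censored GPD Tobit model with z = 1 + ξT_u/σ, the Fisher information entry E[-∂²l(ξ,σ)/∂ξ²] equals 2/((1+ξ)(1+2ξ)) + z^{-2-1/ξ}/((1+ξ)(1+2ξ)ξ²) · { -1 - ξ + z(2 + 4ξ) - z²(1+ξ)(1+2ξ) }. -/

import Mathlib

/-!
As a function of `ξ`, each branch of the censored log-likelihood has the form
`c - (a + ξ⁻¹) * log (1 + ξ * k)`, so `-∂²l/∂ξ²` is explicit on both sides of `T_u`.
Above `T_u` it does not depend on `y`, and its expectation there is that constant times the
survival probability `z ^ (-1/ξ)`. On `(0, T_u]` the integrand has an elementary antiderivative: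
`u ^ (-1/ξ)` times a combination of `log u`, `1`, `u⁻¹`, `u⁻²`, where `u = 1 + ξ * y / σ`.
What remains is algebra in `z` and `ξ`.
-/

open MeasureTheory

/-- GPD CDF. -/
noncomputable def gpdCDF (ξ σ y : ℝ) : ℝ := 1 - (1 + ξ * y / σ) ^ (-1/ξ)

/-- GPD density. -/
noncomputable def gpdPDF (ξ σ y : ℝ) : ℝ := σ⁻¹ * (1 + ξ * y / σ) ^ (-1 - 1/ξ)

/-- Censored (Tobit) GPD log-likelihood. -/
noncomputable def cll (Tu ξ σ y : ℝ) : ℝ :=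
  if Tu < y then Real.log (1 - gpdCDF ξ σ Tu) else Real.log (gpdPDF ξ σ y)

open Set Filter Topology

/-- Both branches of `cll`, as functions of `ξ`, are `c - logTerm a k ξ`: with `a = 1`,
`k = y / σ` below the threshold and `a = 0`, `k = Tu / σ` above it. -/
noncomputable def logTerm (a k t : ℝ) : ℝ := (a + t⁻¹) * Real.log (1 + t * k)

noncomputable def logTermDeriv2 (a k t : ℝ) : ℝ :=
  2 * (t⁻¹) ^ 3 * Real.log (1 + t * k) - 2 * (t⁻¹) ^ 2 * (k / (1 + t * k))
    - (a + t⁻¹) * (k / (1 + t * k)) ^ 2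

section logTerm

variable {a k t : ℝ}

lemma hasDerivAt_log_one_add_mul (hu : 1 + t * k ≠ 0) :
    HasDerivAt (fun s => Real.log (1 + s * k)) (k / (1 + t * k)) t := by
  simpa using (((hasDerivAt_id t).mul_const k).const_add 1).log hu

lemma hasDerivAt_logTerm (ht : t ≠ 0) (hu : 1 + t * k ≠ 0) :
    HasDerivAt (logTerm a k)
      (-(t⁻¹) ^ 2 * Real.log (1 + t * k) + (a + t⁻¹) * (k / (1 + t * k))) t := by
  have hinv : HasDerivAt (fun s => a + s⁻¹) (-(t⁻¹) ^ 2) t := by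
    simpa [inv_pow] using (hasDerivAt_inv ht).const_add a
  exact hinv.mul (hasDerivAt_log_one_add_mul hu)

lemma hasDerivAt_deriv_logTerm (ht : t ≠ 0) (hu : 1 + t * k ≠ 0) :
    HasDerivAt
      (fun s => -(s⁻¹) ^ 2 * Real.log (1 + s * k) + (a + s⁻¹) * (k / (1 + s * k)))
      (logTermDeriv2 a k t) t := by
  have hinv := hasDerivAt_inv ht
  have hsq : HasDerivAt (fun s => -(s⁻¹) ^ 2) (2 * (t⁻¹) ^ 3) t := by
    refine ((hinv.fun_pow 2).fun_neg).congr_deriv ?_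
    norm_num
    field_simp
  have hfrac : HasDerivAt (fun s => k / (1 + s * k)) (-(k / (1 + t * k)) ^ 2) t := by
    have h := ((((hasDerivAt_id t).mul_const k).const_add 1).fun_inv hu).const_mul k
    simp only [id, one_mul, ← div_eq_mul_inv] at h
    refine h.congr_deriv ?_
    field_simp
  refine ((hsq.mul (hasDerivAt_log_one_add_mul hu)).add
    ((hinv.const_add a).mul hfrac)).congr_deriv ?_
  rw [logTermDeriv2]
  field_simp
  ring

lemma deriv_deriv_logTerm (ht : t ≠ 0) (hu : 1 + t * k ≠ 0) :
    deriv (deriv (logTerm a k)) t = logTermDeriv2 a k t := by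
  have hu_near : ∀ᶠ s in 𝓝 t, 1 + s * k ≠ 0 :=
    (by fun_prop : Continuous fun s : ℝ => 1 + s * k).continuousAt.eventually_ne hu
  have hderiv : deriv (logTerm a k) =ᶠ[𝓝 t]
      fun s => -(s⁻¹) ^ 2 * Real.log (1 + s * k) + (a + s⁻¹) * (k / (1 + s * k)) := by
    filter_upwards [eventually_ne_nhds ht, hu_near] with s hs hsu
    exact (hasDerivAt_logTerm hs hsu).deriv
  rw [hderiv.deriv_eq]
  exact (hasDerivAt_deriv_logTerm ht hu).deriv

end logTerm

lemma deriv_deriv_const_sub (c : ℝ) (f : ℝ → ℝ) (x : ℝ) :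
    deriv (deriv fun t => c - f t) x = -deriv (deriv f) x := by
  rw [deriv_const_sub', deriv.fun_neg]

section cll

variable {Tu ξ σ y : ℝ}

lemma cll_of_le (hyT : y ≤ Tu) (hσ : σ ≠ 0) {t : ℝ} (hu : 0 < 1 + t * (y / σ)) :
    cll Tu t σ y = -Real.log σ - logTerm 1 (y / σ) t := by
  rw [cll, if_neg hyT.not_gt, gpdPDF, mul_div_assoc,
    Real.log_mul (inv_ne_zero hσ) (Real.rpow_pos_of_pos hu _).ne', Real.log_inv,
    Real.log_rpow hu, logTerm]
  ring

lemma cll_of_lt (hyT : Tu < y) {t : ℝ} (hu : 0 < 1 + t * (Tu / σ)) :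
    cll Tu t σ y = -logTerm 0 (Tu / σ) t := by
  rw [cll, if_pos hyT, gpdCDF, sub_sub_cancel, mul_div_assoc, Real.log_rpow hu, logTerm]
  ring

lemma deriv_deriv_cll_of_le (hξ : 0 < ξ) (hσ : 0 < σ) (hy : 0 ≤ y) (hyT : y ≤ Tu) :
    deriv (deriv fun t => cll Tu t σ y) ξ = -logTermDeriv2 1 (y / σ) ξ := by
  have hk : 0 ≤ y / σ := div_nonneg hy hσ.le
  have hcll : (fun t => cll Tu t σ y) =ᶠ[𝓝 ξ]
      fun t => -Real.log σ - logTerm 1 (y / σ) t := by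
    filter_upwards [Ioi_mem_nhds hξ] with t ht
    have ht : 0 < t := ht
    exact cll_of_le hyT hσ.ne' (by positivity)
  rw [hcll.deriv.deriv_eq, deriv_deriv_const_sub,
    deriv_deriv_logTerm hξ.ne' (by positivity)]

lemma deriv_deriv_cll_of_lt (hξ : 0 < ξ) (hσ : 0 < σ) (hTu : 0 ≤ Tu) (hyT : Tu < y) :
    deriv (deriv fun t => cll Tu t σ y) ξ = -logTermDeriv2 0 (Tu / σ) ξ := by
  have hk : 0 ≤ Tu / σ := div_nonneg hTu hσ.le
  have hcll : (fun t => cll Tu t σ y) =ᶠ[𝓝 ξ] fun t => 0 - logTerm 0 (Tu / σ) t := by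
    filter_upwards [Ioi_mem_nhds hξ] with t ht
    have ht : 0 < t := ht
    rw [zero_sub]
    exact cll_of_lt hyT (by positivity)
  rw [hcll.deriv.deriv_eq, deriv_deriv_const_sub,
    deriv_deriv_logTerm hξ.ne' (by positivity)]

end cll

section gpd

variable {ξ σ : ℝ}

lemma hasDerivAt_gpdCDF (hξ : ξ ≠ 0) {y : ℝ} (hu : 1 + ξ * y / σ ≠ 0) :
    HasDerivAt (gpdCDF ξ σ) (gpdPDF ξ σ y) y := by
  have hbase : HasDerivAt (fun y => 1 + ξ * y / σ) (ξ / σ) y := by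
    simpa using (((hasDerivAt_id y).const_mul ξ).div_const σ).const_add 1
  refine ((hbase.rpow_const (p := -1 / ξ) (Or.inl hu)).const_sub 1).congr_deriv ?_
  rw [gpdPDF, show (-1 - 1 / ξ : ℝ) = -1 / ξ - 1 by ring]
  field_simp

lemma tendsto_gpdCDF_atTop (hξ : 0 < ξ) (hσ : 0 < σ) :
    Tendsto (gpdCDF ξ σ) atTop (𝓝 1) := by
  have hbase : Tendsto (fun y => 1 + ξ * y / σ) atTop atTop :=
    tendsto_atTop_add_const_left _ _
      ((tendsto_id.const_mul_atTop hξ).atTop_div_const hσ)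
  have hpow := (tendsto_rpow_neg_atTop (one_div_pos.2 hξ)).comp hbase
  have hcdf : gpdCDF ξ σ = fun y => 1 - (1 + ξ * y / σ) ^ (-(1 / ξ)) := by
    funext y; rw [gpdCDF, neg_div]
  simpa [hcdf] using hpow.const_sub 1

lemma hasDerivAt_gpdCDF_of_nonneg (hξ : 0 < ξ) (hσ : 0 < σ) {y : ℝ} (hy : 0 ≤ y) :
    HasDerivAt (gpdCDF ξ σ) (gpdPDF ξ σ y) y :=
  hasDerivAt_gpdCDF hξ.ne' (by positivity)

lemma gpdPDF_nonneg (hξ : 0 ≤ ξ) (hσ : 0 < σ) {y : ℝ} (hy : 0 ≤ y) :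
    0 ≤ gpdPDF ξ σ y := by
  unfold gpdPDF
  positivity

lemma integrableOn_Ioi_gpdPDF (hξ : 0 < ξ) (hσ : 0 < σ) {a : ℝ} (ha : 0 ≤ a) :
    IntegrableOn (gpdPDF ξ σ) (Ioi a) :=
  integrableOn_Ioi_deriv_of_nonneg'
    (fun _ hy => hasDerivAt_gpdCDF_of_nonneg hξ hσ (ha.trans hy))
    (fun _ hy => gpdPDF_nonneg hξ.le hσ (ha.trans hy.le)) (tendsto_gpdCDF_atTop hξ hσ)

lemma integral_Ioi_gpdPDF (hξ : 0 < ξ) (hσ : 0 < σ) {a : ℝ} (ha : 0 ≤ a) :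
    ∫ y in Ioi a, gpdPDF ξ σ y = 1 - gpdCDF ξ σ a :=
  integral_Ioi_of_hasDerivAt_of_nonneg'
    (fun _ hy => hasDerivAt_gpdCDF_of_nonneg hξ hσ (ha.trans hy))
    (fun _ hy => gpdPDF_nonneg hξ.le hσ (ha.trans hy.le)) (tendsto_gpdCDF_atTop hξ hσ)

end gpd

noncomputable def fisherXiPrimitive (ξ σ y : ℝ) : ℝ :=
  (ξ⁻¹) ^ 3 * (1 + ξ * y / σ) ^ (-1 / ξ) *
    (-2 * Real.log (1 + ξ * y / σ) + (3 - ξ) - 2 * (ξ + 2) / (ξ + 1) / (1 + ξ * y / σ)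
      + (ξ + 1) / (2 * ξ + 1) / (1 + ξ * y / σ) ^ 2)

lemma hasDerivAt_fisherXiPrimitive {ξ σ y : ℝ} (hξ : 0 < ξ) (hσ : σ ≠ 0)
    (hu : 0 < 1 + ξ * y / σ) :
    HasDerivAt (fisherXiPrimitive ξ σ)
      (logTermDeriv2 1 (y / σ) ξ * gpdPDF ξ σ y) y := by
  have hbase : HasDerivAt (fun y => 1 + ξ * y / σ) (ξ / σ) y := by
    simpa using (((hasDerivAt_id y).const_mul ξ).div_const σ).const_add 1
  have hpow := hbase.rpow_const (p := -1 / ξ) (Or.inl hu.ne')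
  have hlog := hbase.log hu.ne'
  have hinv := hbase.fun_inv hu.ne'
  have hinv2 := (hbase.fun_pow 2).fun_inv (pow_ne_zero 2 hu.ne')
  have H := (hpow.const_mul ((ξ⁻¹) ^ 3)).fun_mul
    ((((hlog.const_mul (-2)).add_const (3 - ξ)).fun_sub
      (hinv.const_mul (2 * (ξ + 2) / (ξ + 1)))).fun_add
      (hinv2.const_mul ((ξ + 1) / (2 * ξ + 1))))
  simp only [← div_eq_mul_inv, ← mul_assoc] at H
  unfold fisherXiPrimitive
  refine H.congr_deriv ?_
  rw [logTermDeriv2, gpdPDF, show (-1 - 1 / ξ : ℝ) = -1 / ξ - 1 by ring,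
    Real.rpow_sub_one hu.ne']
  simp only [mul_div_assoc] at hu ⊢
  generalize y / σ = k at hu ⊢
  field_simp
  ring

lemma continuousOn_logTermDeriv2_mul_gpdPDF {ξ σ : ℝ} (hξ : 0 < ξ) (hσ : 0 < σ) :
    ContinuousOn (fun y => logTermDeriv2 1 (y / σ) ξ * gpdPDF ξ σ y) (Ici 0) := by
  intro y (hy : 0 ≤ y)
  apply ContinuousAt.continuousWithinAt
  unfold logTermDeriv2 gpdPDF
  fun_prop (disch := first | positivity | exact Or.inl (by positivity))

lemma integral_Ioc_logTermDeriv2_mul_gpdPDF {ξ σ b : ℝ} (hξ : 0 < ξ) (hσ : 0 < σ)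
    (hb : 0 ≤ b) :
    ∫ y in Ioc 0 b, logTermDeriv2 1 (y / σ) ξ * gpdPDF ξ σ y
      = fisherXiPrimitive ξ σ b - fisherXiPrimitive ξ σ 0 := by
  rw [← intervalIntegral.integral_of_le hb]
  refine intervalIntegral.integral_eq_sub_of_hasDerivAt ?_ ?_
  · rw [uIcc_of_le hb]
    exact fun y hy => hasDerivAt_fisherXiPrimitive hξ hσ.ne' (by have := hy.1; positivity)
  · exact ((continuousOn_logTermDeriv2_mul_gpdPDF hξ hσ).mono Icc_subset_Ici_self)
      |>.intervalIntegrable_of_Icc hb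

lemma fisherXi_closed_form {ξ σ Tu : ℝ} (hξ : 0 < ξ) (hσ : 0 < σ) (hTu : 0 ≤ Tu) :
    fisherXiPrimitive ξ σ Tu - fisherXiPrimitive ξ σ 0
        + logTermDeriv2 0 (Tu / σ) ξ * (1 - gpdCDF ξ σ Tu)
      = 2 / ((1 + ξ) * (1 + 2*ξ)) +
        (1 + ξ * Tu / σ) ^ (-2 - 1/ξ) / ((1 + ξ) * (1 + 2*ξ) * ξ^2) *
          (-1 - ξ + (1 + ξ * Tu / σ) * (2 + 4*ξ)
            - (1 + ξ * Tu / σ)^2 * (1 + ξ) * (1 + 2*ξ)) := by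
  have hz : 0 < 1 + ξ * Tu / σ := by positivity
  rw [fisherXiPrimitive, fisherXiPrimitive, logTermDeriv2, gpdCDF, sub_sub_cancel,
    show (-2 - 1 / ξ : ℝ) = -1 / ξ - (2 : ℕ) by push_cast; ring, Real.rpow_sub_natCast hz.ne']
  simp only [mul_zero, zero_div, add_zero, Real.one_rpow, Real.log_one, mul_div_assoc] at hz ⊢
  generalize Tu / σ = k at hz ⊢
  field_simp
  ring

/-- With z = 1 + ξT_u/σ, the Fisher information entry E[-∂²l/∂ξ²] equals
2/((1+ξ)(1+2ξ)) + z^{-2-1/ξ}/((1+ξ)(1+2ξ)ξ²)·{-1-ξ+z(2+4ξ)-z²(1+ξ)(1+2ξ)}. -/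
theorem censored_gpd_fisher_xi (ξ σ Tu : ℝ) (hξ : 0 < ξ) (hσ : 0 < σ) (hTu : 0 < Tu) :
    ∫ y in Set.Ioi (0:ℝ),
        (-(deriv (deriv (fun t => cll Tu t σ y)) ξ)) * gpdPDF ξ σ y
      = 2 / ((1 + ξ) * (1 + 2*ξ)) +
        (1 + ξ * Tu / σ) ^ (-2 - 1/ξ) / ((1 + ξ) * (1 + 2*ξ) * ξ^2) *
          (-1 - ξ + (1 + ξ * Tu / σ) * (2 + 4*ξ)
            - (1 + ξ * Tu / σ)^2 * (1 + ξ) * (1 + 2*ξ)) := by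
  set f := fun y => (-(deriv (deriv (fun t => cll Tu t σ y)) ξ)) * gpdPDF ξ σ y
  have h_unc : EqOn f (fun y => logTermDeriv2 1 (y / σ) ξ * gpdPDF ξ σ y) (Ioc 0 Tu) :=
    fun y hy => by simp only [f, deriv_deriv_cll_of_le hξ hσ hy.1.le hy.2, neg_neg]
  have h_cen : EqOn f (fun y => logTermDeriv2 0 (Tu / σ) ξ * gpdPDF ξ σ y) (Ioi Tu) :=
    fun y hy => by simp only [f, deriv_deriv_cll_of_lt hξ hσ hTu.le hy, neg_neg]
  have hint_unc : IntegrableOn f (Ioc 0 Tu) :=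
    (((continuousOn_logTermDeriv2_mul_gpdPDF hξ hσ).mono Icc_subset_Ici_self).integrableOn_Icc
      |>.mono_set Ioc_subset_Icc_self).congr_fun h_unc.symm measurableSet_Ioc
  have hint_cen : IntegrableOn f (Ioi Tu) :=
    IntegrableOn.congr_fun ((integrableOn_Ioi_gpdPDF hξ hσ hTu.le).const_mul _) h_cen.symm
      measurableSet_Ioi
  rw [← Ioc_union_Ioi_eq_Ioi hTu.le,
    setIntegral_union (Ioc_disjoint_Ioi le_rfl) measurableSet_Ioi hint_unc hint_cen,
    setIntegral_congr_fun measurableSet_Ioc h_unc, setIntegral_congr_fun measurableSet_Ioi h_cen,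
    integral_Ioc_logTermDeriv2_mul_gpdPDF hξ hσ hTu.le, integral_const_mul,
    integral_Ioi_gpdPDF hξ hσ hTu.le]
  exact fisherXi_closed_form hξ hσ hTu.le
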